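/- For any word and any interval [i..j] of its positions, there is at most one run whose Oroot starts after position j while its Lroot is an interval contained in [i..j]. -/

import Mathlib

open List

universe u

/-- The factor `w[i..j]` of a word (inclusive positions). -/
def factor {α : Type u} (w : List α) (i j : ℕ) : List α := (w.drop i).take (j - i + 1)

/-- `p` is a period length of the word `u`. -/
def HasPeriodLen {α : Type u} (u : List α) (p : ℕ) : Prop :=
  1 ≤ p ∧ ∀ k, k + p < u.length → u[k]? = u[k + p]?

/-- The smallest period of a word. -/
noncomputable def minPeriod {α : Type u} (u : List α) : ℕ := sInf {p | HasPeriodLen u p}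

/-- `[i..j]` is a run in `w`: the factor is periodic with smallest period at most half
its length, and the periodicity extends neither to the left nor to the right. -/
def IsRun {α : Type u} (w : List α) (i j : ℕ) : Prop :=
  i < j ∧ j < w.length ∧
  2 * minPeriod (factor w i j) ≤ j - i + 1 ∧
  (0 < i → minPeriod (factor w i j) < minPeriod (factor w (i - 1) j)) ∧
  (j + 1 < w.length → minPeriod (factor w i j) < minPeriod (factor w i (j + 1)))
/-- `k` is the starting position of the greatest proper suffix of the factor `w[i..j]`,
with respect to the strict order `lt` on words. -/
def IsGreatestProperSuffixPos {α : Type u} (lt : List α → List α → Prop)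
    (w : List α) (i j k : ℕ) : Prop :=
  i < k ∧ k ≤ j ∧ ∀ k', i < k' → k' ≤ j → k' ≠ k → lt (factor w k' j) (factor w k j)
/-- `listPow u n` is the `n`-th power `u^n` of the word `u`. -/
def listPow {α : Type u} (v : List α) : ℕ → List α
  | 0 => []
  | n + 1 => v ++ listPow v n

/-- A word is primitive if it is not a proper power. -/
def Primitive {α : Type u} (v : List α) : Prop :=
  v ≠ [] ∧ ∀ r n, 2 ≤ n → v ≠ listPow r n

/-- `c` is a conjugate (rotation) of `v`. -/
def IsConjWord {α : Type u} (v c : List α) : Prop := ∃ s t, v = s ++ t ∧ c = t ++ s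
/-- `u` is a Lyndon word for the alphabet order `r`: nonempty and lexicographically
smaller than each of its proper nonempty suffixes. -/
def IsLyndonWrt {α : Type u} (r : α → α → Prop) (v : List α) : Prop :=
  v ≠ [] ∧ ∀ t, t <:+ v → t ≠ v → t ≠ [] → List.Lex r v t

/-- The run `[i..j]` in `w` is governed by the order `r`: either the run ends the word,
or the letter following the run is `r`-smaller than the letter one period before it. -/
noncomputable def UseOrd {α : Type u} (r : α → α → Prop) (w : List α) (i j : ℕ) : Prop :=
  j + 1 = w.length ∨
    ∃ a b, w[j + 1]? = some a ∧ w[j + 1 - minPeriod (factor w i j)]? = some b ∧ r a b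

/-- `v` is the Lyndon root (w.r.t. the order `r`) of the run `[i..j]` of `w`:
the Lyndon conjugate of its root. -/
def LyndonRootOf {α : Type u} (r : α → α → Prop) (w : List α) (i j : ℕ) (v : List α) : Prop :=
  IsLyndonWrt r v ∧ IsConjWord (factor w i (i + minPeriod (factor w i j) - 1)) v

/-- `[a..b]` is the Lroot of the run `[i..j]` of `w`: the interval of the first occurrence,
inside the run, of the Lyndon root of the run, taken with respect to the lexicographic order
determined by the letter following the run. -/
noncomputable def IsLroot {α : Type u} [LinearOrder α] (w : List α) (i j a b : ℕ) : Prop :=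
  IsRun w i j ∧
  ∃ v, ((UseOrd (· < ·) w i j ∧ LyndonRootOf (· < ·) w i j v) ∨
        (¬ UseOrd (· < ·) w i j ∧ LyndonRootOf (· > ·) w i j v)) ∧
    i ≤ a ∧ b ≤ j ∧ b + 1 = a + v.length ∧ factor w a b = v ∧
    ∀ a', i ≤ a' → a' < a → factor w a' (a' + v.length - 1) ≠ v
/-- `[a..b]` is the Oroot of the run `[i..j]` of `w` (Bannai et al.): if the run ends the
word, or the letter following the run is smaller than the letter one period before it,
it is the first occurrence of a Lyndon root of the run that is not a prefix of the run;
otherwise it is the interval of the length-`p` prefix of the greatest proper suffix of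
the run factor. -/
noncomputable def IsOroot {α : Type u} [LinearOrder α] (w : List α) (i j a b : ℕ) : Prop :=
  IsRun w i j ∧ b + 1 = a + minPeriod (factor w i j) ∧
  ((UseOrd (· < ·) w i j ∧ i < a ∧ b ≤ j ∧
      ∃ v, (LyndonRootOf (· < ·) w i j v ∨ LyndonRootOf (· > ·) w i j v) ∧
        factor w a b = v ∧
        ∀ a', i < a' → a' < a → factor w a' (a' + minPeriod (factor w i j) - 1) ≠ v) ∨
    (¬ UseOrd (· < ·) w i j ∧
      IsGreatestProperSuffixPos (List.Lex (· < ·)) w i j a))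

/-- `[a..b]` is the Oroot of the run `[i..j]` of `w` obtained with respect to the
alphabet order `r`: the run is governed by `r`, and `[a..b]` is the first occurrence of
the `r`-Lyndon root of the run that is not a prefix of the run. -/
noncomputable def IsOrootOrd {α : Type u} (r : α → α → Prop) (w : List α) (i j a b : ℕ) : Prop :=
  IsRun w i j ∧ UseOrd r w i j ∧ b + 1 = a + minPeriod (factor w i j) ∧ i < a ∧ b ≤ j ∧
  LyndonRootOf r w i j (factor w a b) ∧
  ∀ a', i < a' → a' < a → factor w a' (a' + minPeriod (factor w i j) - 1) ≠ factor w a b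

/-!
An Oroot starts within the first period of its run: one period further left there would be an
earlier non-prefix occurrence of the Lyndon root, resp. a suffix of the run of which the suffix
at the Oroot is a prefix, so the latter would not be the greatest. So if an Lroot ends at or before `j` and the Oroot of its run
starts after `j`, the Lroot is the prefix of the run, it ends exactly at `j`, and the run starts
with the square `u u` of its Lyndon root `u`. Two such runs with different starts would give
Lyndon roots `v`, `u` with `|v| < |u|`, both ending at `j` and both prefixes of the word after `j`,
so `v` would be a border of `u`. With equal starts the periods are equal too, and right
maximality of the shorter run forbids distinct ends.
-/

section Words

variable {β : Type u}

theorem List.IsPrefix.not_lex {r : β → β → Prop} [Std.Irrefl r] {t u : List β}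
    (h : t <+: u) : ¬ List.Lex r u t := by
  obtain ⟨s, rfl⟩ := h
  induction t with
  | nil => exact List.not_lex_nil
  | cons a t ih =>
    intro h
    cases h with
    | cons h => exact ih h
    | rel h => exact Std.Irrefl.irrefl a h

theorem IsLyndonWrt.eq_nil_or_eq_of_isPrefix_of_isSuffix {r : β → β → Prop} [Std.Irrefl r]
    {u v : List β} (hu : IsLyndonWrt r u) (hp : v <+: u) (hs : v <:+ u) :
    v = [] ∨ v = u := by
  by_contra! h
  exact hp.not_lex (hu.2 v hs h.2 h.1)

theorem IsConjWord.length_eq {v c : List β} (h : IsConjWord v c) : c.length = v.length := by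
  obtain ⟨s, t, rfl, rfl⟩ := h
  simp [Nat.add_comm]

theorem length_factor (w : List β) {i j : ℕ} (hij : i ≤ j) (hj : j < w.length) :
    (factor w i j).length = j - i + 1 := by
  simp [factor]; omega

theorem getElem?_factor (w : List β) {i j k : ℕ} (hk : k < j - i + 1) :
    (factor w i j)[k]? = w[i + k]? := by
  simp [factor, hk]

theorem factor_isPrefix_factor (w : List β) (i : ℕ) {j j' : ℕ} (h : j ≤ j') :
    factor w i j <+: factor w i j' :=
  List.take_prefix_take_left (by omega)

theorem factor_isSuffix_factor (w : List β) {i i' j : ℕ} (hi : i ≤ i') (hi' : i' ≤ j) :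
    factor w i' j <:+ factor w i j := by
  have : factor w i' j = (factor w i j).drop (i' - i) := by
    simp only [factor, List.drop_take, List.drop_drop]
    congr 2 <;> omega
  exact this ▸ List.drop_suffix _ _

theorem hasPeriodLen_minPeriod (u : List β) : HasPeriodLen u (minPeriod u) :=
  Nat.sInf_mem (s := {p | HasPeriodLen u p})
    ⟨u.length + 1, Nat.le_add_left 1 _, fun k hk => by omega⟩

theorem minPeriod_le {u : List β} {p : ℕ} (h : HasPeriodLen u p) : minPeriod u ≤ p :=
  Nat.sInf_le h

theorem HasPeriodLen.of_isPrefix {u v : List β} {p : ℕ} (h : HasPeriodLen u p) (hv : v <+: u) :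
    HasPeriodLen v p := by
  refine ⟨h.1, fun k hk => ?_⟩
  rw [List.prefix_iff_eq_take.1 hv, List.getElem?_take, List.getElem?_take,
    if_pos (by omega), if_pos hk]
  exact h.2 k (by have := hv.length_le; omega)

theorem HasPeriodLen.getElem?_add_of_factor {w : List β} {i j q x : ℕ}
    (h : HasPeriodLen (factor w i j) q) (hj : j < w.length) (hx : i ≤ x) (hxq : x + q ≤ j) :
    w[x]? = w[x + q]? := by
  have := h.2 (x - i) (by rw [length_factor w (by omega) hj]; omega)
  rwa [getElem?_factor w (by omega), getElem?_factor w (by omega),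
    show i + (x - i) = x by omega, show i + (x - i + q) = x + q by omega] at this

theorem HasPeriodLen.factor_eq_factor_add {w : List β} {i j q x y : ℕ}
    (h : HasPeriodLen (factor w i j) q) (hj : j < w.length) (hx : i ≤ x) (hxy : x ≤ y)
    (hyq : y + q ≤ j) : factor w x y = factor w (x + q) (y + q) := by
  apply List.ext_getElem?
  intro k
  by_cases hk : k < y - x + 1
  · rw [getElem?_factor w hk, getElem?_factor w (by omega),
      h.getElem?_add_of_factor hj (by omega) (by omega)]
    congr 1; omega
  · rw [List.getElem?_eq_none (by rw [length_factor w hxy (by omega)]; omega),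
      List.getElem?_eq_none (by rw [length_factor w (by omega) (by omega)]; omega)]

theorem HasPeriodLen.factor_add_isPrefix {w : List β} {i j q x : ℕ}
    (h : HasPeriodLen (factor w i j) q) (hj : j < w.length) (hx : i ≤ x) (hxq : x + q ≤ j) :
    factor w (x + q) j <+: factor w x j := by
  have hshift := h.factor_eq_factor_add hj hx (y := j - q) (by omega) (by omega)
  rw [show j - q + q = j by omega] at hshift
  exact hshift ▸ factor_isPrefix_factor w x (by omega)

end Words

section Runs

variable {β : Type u}

theorem IsRun.factor_isPrefix_drop {w : List β} {i j k : ℕ} (h : IsRun w i j)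
    (hk : k + 1 = i + minPeriod (factor w i j)) : factor w i k <+: w.drop (k + 1) := by
  obtain ⟨hij, hj, hsq, -, -⟩ := h
  have hq := hasPeriodLen_minPeriod (factor w i j)
  have := hq.1
  rw [hq.factor_eq_factor_add hj le_rfl (by omega) (by omega), ← hk]
  exact List.take_prefix _ _

theorem IsRun.end_eq_of_minPeriod_eq {w : List β} {i j₁ j₂ : ℕ} (h₁ : IsRun w i j₁)
    (h₂ : IsRun w i j₂) (hq : minPeriod (factor w i j₁) = minPeriod (factor w i j₂)) :
    j₁ = j₂ := by
  wlog hlt : j₁ < j₂ generalizing j₁ j₂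
  · rcases Nat.lt_or_eq_of_le (not_lt.1 hlt) with h | h
    · exact (this h₂ h₁ hq.symm h).symm
    · exact h.symm
  have hper : HasPeriodLen (factor w i (j₁ + 1)) (minPeriod (factor w i j₂)) :=
    (hasPeriodLen_minPeriod _).of_isPrefix (factor_isPrefix_factor w i hlt)
  have := h₁.2.2.2.2 (by have := h₂.2.1; omega)
  have := minPeriod_le hper
  omega

theorem LyndonRootOf.length_eq {r : β → β → Prop} {w : List β} {i j : ℕ} {v : List β}
    (hR : IsRun w i j) (h : LyndonRootOf r w i j v) : v.length = minPeriod (factor w i j) := by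
  obtain ⟨hij, hj, hsq, -, -⟩ := hR
  have := (hasPeriodLen_minPeriod (factor w i j)).1
  rw [h.2.length_eq, length_factor w (by omega) (by omega)]
  omega

theorem IsRun.start_eq_of_isLyndonWrt_root {w : List β} {i₁ j₁ i₂ j₂ k : ℕ}
    (h₁ : IsRun w i₁ j₁) (h₂ : IsRun w i₂ j₂)
    (hk₁ : k + 1 = i₁ + minPeriod (factor w i₁ j₁))
    (hk₂ : k + 1 = i₂ + minPeriod (factor w i₂ j₂))
    (hu₁ : ∃ r : β → β → Prop, Std.Irrefl r ∧ IsLyndonWrt r (factor w i₁ k))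
    (hu₂ : ∃ r : β → β → Prop, Std.Irrefl r ∧ IsLyndonWrt r (factor w i₂ k)) : i₁ = i₂ := by
  wlog hlt : i₁ < i₂ generalizing i₁ j₁ i₂ j₂
  · rcases Nat.lt_or_eq_of_le (not_lt.1 hlt) with h | h
    · exact (this h₂ h₁ hk₂ hk₁ hu₂ hu₁ h).symm
    · exact h.symm
  obtain ⟨r, _, hu⟩ := hu₁
  have := (hasPeriodLen_minPeriod (factor w i₂ j₂)).1
  have hk : k < w.length := by have := h₁.2.1; have := h₁.2.2.1; omega
  have hlen₁ := length_factor w (i := i₁) (by omega) hk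
  have hlen₂ := length_factor w (i := i₂) (by omega) hk
  -- both roots are prefixes of the word after `k`, so the shorter one is a border of the longer
  have hp := List.prefix_of_prefix_length_le (h₂.factor_isPrefix_drop hk₂)
    (h₁.factor_isPrefix_drop hk₁) (by omega)
  rcases hu.eq_nil_or_eq_of_isPrefix_of_isSuffix hp (factor_isSuffix_factor w hlt.le (by omega))
    with h | h
  · simp [h] at hlen₂
  · rw [h] at hlen₂; omega

end Runs

section Roots

variable {β : Type u} [LinearOrder β]

theorem IsLroot.end_add_one {w : List β} {i j a b : ℕ} (h : IsLroot w i j a b) :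
    b + 1 = a + minPeriod (factor w i j) := by
  obtain ⟨hR, v, hv, -, -, hlen, -, -⟩ := h
  rcases hv with ⟨-, hv⟩ | ⟨-, hv⟩ <;> rw [hlen, hv.length_eq hR]

theorem IsLroot.exists_isLyndonWrt {w : List β} {i j a b : ℕ} (h : IsLroot w i j a b) :
    ∃ r : β → β → Prop, Std.Irrefl r ∧ IsLyndonWrt r (factor w a b) := by
  obtain ⟨-, v, hv, -, -, -, rfl, -⟩ := h
  rcases hv with ⟨-, hv⟩ | ⟨-, hv⟩
  · exact ⟨_, inferInstance, hv.1⟩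
  · exact ⟨_, inferInstance, hv.1⟩

theorem IsOroot.le_add_minPeriod {w : List β} {i j o p : ℕ} (h : IsOroot w i j o p) :
    o ≤ i + minPeriod (factor w i j) := by
  obtain ⟨hR, hp, hcase⟩ := h
  have hq := hasPeriodLen_minPeriod (factor w i j)
  have hq1 := hq.1
  have hj := hR.2.1
  by_contra! ho
  rcases hcase with ⟨-, -, hpj, v, -, hv, hfirst⟩ | ⟨-, -, hoj, hgreatest⟩
  · apply hfirst (o - minPeriod (factor w i j)) (by omega) (by omega)
    rw [← hv, hq.factor_eq_factor_add hj (by omega) (by omega) (by omega)]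
    congr 1 <;> omega
  · have hpre := hq.factor_add_isPrefix hj (x := o - minPeriod (factor w i j)) (by omega)
      (by omega)
    rw [Nat.sub_add_cancel (by omega)] at hpre
    exact hpre.not_lex (hgreatest _ (by omega) (by omega) (by omega))

theorem IsLroot.eq_of_isOroot {w : List β} {i j a b o p k : ℕ} (hL : IsLroot w i j a b)
    (hO : IsOroot w i j o p) (hb : b ≤ k) (hk : k < o) : a = i ∧ b = k := by
  have := hL.end_add_one
  have := hO.le_add_minPeriod
  obtain ⟨-, -, -, hia, -⟩ := hL
  omega

end Roots

theorem at_most_one_oroot_after_interval_general {α : Type u} [LinearOrder α] (w : List α)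
    (j : ℕ) (i1 j1 a1 b1 o1 p1 i2 j2 a2 b2 o2 p2 : ℕ)
    (hL1 : IsLroot w i1 j1 a1 b1) (hO1 : IsOroot w i1 j1 o1 p1)
    (h1r : b1 ≤ j) (h1o : j < o1)
    (hL2 : IsLroot w i2 j2 a2 b2) (hO2 : IsOroot w i2 j2 o2 p2)
    (h2r : b2 ≤ j) (h2o : j < o2) :
    i1 = i2 ∧ j1 = j2 := by
  obtain ⟨rfl, rfl⟩ := hL1.eq_of_isOroot hO1 h1r h1o
  obtain ⟨rfl, rfl⟩ := hL2.eq_of_isOroot hO2 h2r h2o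
  have hk1 := hL1.end_add_one
  have hk2 := hL2.end_add_one
  obtain rfl := hL1.1.start_eq_of_isLyndonWrt_root hL2.1 hk1 hk2 hL1.exists_isLyndonWrt
    hL2.exists_isLyndonWrt
  exact ⟨rfl, hL1.1.end_eq_of_minPeriod_eq hL2.1 (by omega)⟩

/-- For any interval `[i..j]` of positions, there is at most one run whose Oroot starts
after position `j` while its Lroot is contained in `[i..j]`. -/
theorem at_most_one_oroot_after_interval {α : Type u} [LinearOrder α] (w : List α)
    (i j : ℕ) (i1 j1 a1 b1 o1 p1 i2 j2 a2 b2 o2 p2 : ℕ)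
    (hL1 : IsLroot w i1 j1 a1 b1) (hO1 : IsOroot w i1 j1 o1 p1)
    (h1l : i ≤ a1) (h1r : b1 ≤ j) (h1o : j < o1)
    (hL2 : IsLroot w i2 j2 a2 b2) (hO2 : IsOroot w i2 j2 o2 p2)
    (h2l : i ≤ a2) (h2r : b2 ≤ j) (h2o : j < o2) :
    i1 = i2 ∧ j1 = j2 :=
  at_most_one_oroot_after_interval_general w j i1 j1 a1 b1 o1 p1 i2 j2 a2 b2 o2 p2 hL1 hO1 h1r h1o
    hL2 hO2 h2r h2o
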